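/- Under the hypotheses of the MAP characterization — X, C nonempty sets, R : X × C → Y, y ∈ Y, p : X → ℝ nonnegative attaining its maximum P* > 0, L : X × C → ℝ nonnegative with L(x,c) ≤ L* for some L* > 0 and L(x,c) = L* iff R(x,c) = y, and for every x ∈ X there exists c ∈ C with R(x,c) = y — for every x* ∈ X with p(x*) = P* there exists c ∈ C such that (x*, c) maximizes (x,c) ↦ p(x)·L(x,c) over X × C. In particular, the set of maximizers of the joint function is nonempty, and it contains solutions in which the corruption c makes the render equal to y regardless of the content of the scene x*. -/
import Mathlib


/-- The "billboard solution" consequence of MAP inference in robust inverse graphics: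
for every scene `x*` maximizing the prior, there is a corruption `c` making the render
equal to the observation `y` such that `(x*, c)` is a maximizer of the joint
`(x, c) ↦ p x * L (x, c)`; in particular, the set of maximizers is nonempty. -/
theorem map_inference_admits_billboard_solutions
    {X C Y : Type*} [Nonempty X] [Nonempty C]
    (R : X × C → Y) (y : Y)
    (p : X → ℝ) (hp_nonneg : ∀ x, 0 ≤ p x)
    (Pstar : ℝ) (hPstar_pos : 0 < Pstar)
    (hp_le : ∀ x, p x ≤ Pstar) (hp_attains : ∃ x, p x = Pstar)
    (L : X × C → ℝ) (hL_nonneg : ∀ xc, 0 ≤ L xc)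
    (Lstar : ℝ) (hLstar_pos : 0 < Lstar)
    (hL_le : ∀ xc, L xc ≤ Lstar) (hL_iff : ∀ xc, L xc = Lstar ↔ R xc = y)
    (hbillboard : ∀ x : X, ∃ c : C, R (x, c) = y) :
    (∀ xstar : X, p xstar = Pstar →
        ∃ c : C, R (xstar, c) = y ∧
          ∀ xc' : X × C, p xc'.1 * L xc' ≤ p xstar * L (xstar, c))
      ∧ {xc : X × C | ∀ xc' : X × C, p xc'.1 * L xc' ≤ p xc.1 * L xc}.Nonempty := by
  have key : ∀ xstar : X, p xstar = Pstar →
      ∃ c : C, R (xstar, c) = y ∧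
        ∀ xc' : X × C, p xc'.1 * L xc' ≤ p xstar * L (xstar, c) := by
    intro xstar hx
    obtain ⟨c, hc⟩ := hbillboard xstar
    refine ⟨c, hc, fun xc' => ?_⟩
    have hL : L (xstar, c) = Lstar := (hL_iff _).mpr hc
    rw [hx, hL]
    exact mul_le_mul (hp_le _) (hL_le _) (hL_nonneg _) hPstar_pos.le
  refine ⟨key, ?_⟩
  obtain ⟨xstar, hx⟩ := hp_attains
  obtain ⟨c, _, hmax⟩ := key xstar hx
  exact ⟨(xstar, c), hmax⟩
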